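/- The differential equation x''(t) + (1/40)x(t) = (1 + 2cos(3t))/x(t)^{3/2} + e^{2sin(3t)}/x(t)² + 10 + cos(3t) has at least one positive (2π/3)-periodic solution, i.e. there exists a twice continuously differentiable function x : ℝ → (0,∞) with x(t + 2π/3) = x(t) for all t that satisfies the equation for all t ∈ ℝ. -/

import Mathlib

/-!
Write the equation as `x'' + ω² x = f(t, x)` with `ω² = 1/40` and period `T = 2π/3`. Since
`ωT ≤ π`, the Green's function `G(r) = cos (ωr - ωT/2) / (2ω sin (ωT/2))` of the `T`-periodic
problem for `x'' + ω² x` is nonnegative on `[0, T]` with `∫₀ᵀ G = 1/ω²`, and periodic solutions are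
the fixed points of `x ↦ (t ↦ ∫₀ᵀ G(r) f(t + r, x(t + r)) dr)`. For `x ≥ 300` the right-hand side
lies in `[44/5, 56/5]` and is `1/80`-Lipschitz in `x`, so this map sends functions `≥ 300` to
functions with values in `[352, 448]` and contracts the sup distance by `40/80 = 1/2`; Banach's
fixed point theorem gives the solution.
-/

open Real Set Function intervalIntegral

noncomputable section

def kernelIntegral (k : ℝ → ℝ) (T : ℝ) (h : ℝ → ℝ) (t : ℝ) : ℝ :=
  ∫ r in (0)..T, k r * h (t + r)

section KernelIntegral

variable {k h : ℝ → ℝ} {T : ℝ}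

lemma kernelIntegral_eq_integral_sub (k h : ℝ → ℝ) (T t : ℝ) :
    kernelIntegral k T h t = ∫ s in t..t + T, k (s - t) * h s := by
  simpa [kernelIntegral] using
    integral_comp_add_left (fun s => k (s - t) * h s) t (a := 0) (b := T)

lemma continuous_kernelIntegral (hk : Continuous k) (hh : Continuous h) :
    Continuous (kernelIntegral k T h) := by
  unfold kernelIntegral; fun_prop

lemma kernelIntegral_comp_add_right (k h : ℝ → ℝ) (T c t : ℝ) :
    kernelIntegral k T (fun s => h (s + c)) t = kernelIntegral k T h (t + c) := by
  unfold kernelIntegral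
  congr 1 with r
  rw [add_right_comm]

lemma kernelIntegral_const_mul (c : ℝ) (k h : ℝ → ℝ) (T t : ℝ) :
    kernelIntegral (fun r => c * k r) T h t = c * kernelIntegral k T h t := by
  unfold kernelIntegral
  rw [← integral_const_mul]
  simp only [mul_assoc]

lemma kernelIntegral_sub {h₁ h₂ : ℝ → ℝ} (hk : Continuous k) (h₁c : Continuous h₁)
    (h₂c : Continuous h₂) (t : ℝ) :
    kernelIntegral k T (h₁ - h₂) t = kernelIntegral k T h₁ t - kernelIntegral k T h₂ t := by
  unfold kernelIntegral
  rw [← integral_sub (by apply Continuous.intervalIntegrable; fun_prop)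
    (by apply Continuous.intervalIntegrable; fun_prop)]
  simp only [Pi.sub_apply, mul_sub]

lemma kernelIntegral_mem_Icc {m M : ℝ} (hT : 0 ≤ T) (hk : Continuous k)
    (hk0 : ∀ r ∈ Icc 0 T, 0 ≤ k r) (hh : Continuous h) (hmM : ∀ s, h s ∈ Icc m M) (t : ℝ) :
    kernelIntegral k T h t ∈ Icc (m * ∫ r in (0)..T, k r) (M * ∫ r in (0)..T, k r) := by
  have hint : IntervalIntegrable (fun r => k r * h (t + r)) MeasureTheory.volume 0 T := by
    apply Continuous.intervalIntegrable; fun_prop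
  rw [← integral_const_mul, ← integral_const_mul]
  constructor
  · refine integral_mono_on hT ((hk.const_mul m).intervalIntegrable _ _) hint fun r hr => ?_
    rw [mul_comm]
    exact mul_le_mul_of_nonneg_left (hmM _).1 (hk0 r hr)
  · refine integral_mono_on hT hint ((hk.const_mul M).intervalIntegrable _ _) fun r hr => ?_
    rw [mul_comm M]
    exact mul_le_mul_of_nonneg_left (hmM _).2 (hk0 r hr)

lemma hasDerivAt_integral_add_const {g : ℝ → ℝ} (hg : Continuous g) (T t : ℝ) :
    HasDerivAt (fun t => ∫ s in t..t + T, g s) (g (t + T) - g t) t := by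
  have e : (fun t => ∫ s in t..t + T, g s) =
      fun t => (∫ s in (0)..t + T, g s) - ∫ s in (0)..t, g s :=
    funext fun t => (integral_interval_sub_left (hg.intervalIntegrable _ _)
      (hg.intervalIntegrable _ _)).symm
  rw [e]
  have hT : HasDerivAt (fun t => ∫ s in (0)..t + T, g s) (g (t + T)) t := by
    simpa [Function.comp_def] using
      (hg.integral_hasStrictDerivAt 0 (t + T)).hasDerivAt.comp t ((hasDerivAt_id t).add_const T)
  exact hT.sub (hg.integral_hasStrictDerivAt 0 t).hasDerivAt

variable (ω φ : ℝ)

lemma kernelIntegral_cos_eq (hh : Continuous h) (t : ℝ) :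
    kernelIntegral (fun r => cos (ω * r - φ)) T h t =
      cos (ω * t) * (∫ s in t..t + T, cos (ω * s - φ) * h s)
        + sin (ω * t) * ∫ s in t..t + T, sin (ω * s - φ) * h s := by
  rw [kernelIntegral_eq_integral_sub, ← integral_const_mul, ← integral_const_mul,
    ← integral_add (by apply Continuous.intervalIntegrable; fun_prop)
      (by apply Continuous.intervalIntegrable; fun_prop)]
  congr 1 with s
  rw [show ω * (s - t) - φ = (ω * s - φ) - ω * t by ring, cos_sub]
  ring

lemma kernelIntegral_sin_eq (hh : Continuous h) (t : ℝ) :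
    kernelIntegral (fun r => sin (ω * r - φ)) T h t =
      cos (ω * t) * (∫ s in t..t + T, sin (ω * s - φ) * h s)
        - sin (ω * t) * ∫ s in t..t + T, cos (ω * s - φ) * h s := by
  rw [kernelIntegral_eq_integral_sub, ← integral_const_mul, ← integral_const_mul,
    ← integral_sub (by apply Continuous.intervalIntegrable; fun_prop)
      (by apply Continuous.intervalIntegrable; fun_prop)]
  congr 1 with s
  rw [show ω * (s - t) - φ = (ω * s - φ) - ω * t by ring, sin_sub]
  ring

/- In the window form of `kernelIntegral_cos_eq` the variable `t` only enters through the limits of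
integration and through `cos (ω t)`, `sin (ω t)`; periodicity of `h` merges the two boundary terms. -/
lemma hasDerivAt_kernelIntegral_cos (hh : Continuous h) (hp : Periodic h T) (t : ℝ) :
    HasDerivAt (kernelIntegral (fun r => cos (ω * r - φ)) T h)
      ((cos (ω * T - φ) - cos φ) * h t
        + ω * kernelIntegral (fun r => sin (ω * r - φ)) T h t) t := by
  have hA := hasDerivAt_integral_add_const (g := fun s => cos (ω * s - φ) * h s) (by fun_prop) T t
  have hB := hasDerivAt_integral_add_const (g := fun s => sin (ω * s - φ) * h s) (by fun_prop) T t
  have hc := ((hasDerivAt_id t).const_mul ω).cos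
  have hs := ((hasDerivAt_id t).const_mul ω).sin
  rw [funext (kernelIntegral_cos_eq ω φ hh)]
  refine ((hc.mul hA).add (hs.mul hB)).congr_deriv ?_
  rw [kernelIntegral_sin_eq ω φ hh, hp t]
  generalize (∫ s in t..t + T, cos (ω * s - φ) * h s) = A
  generalize (∫ s in t..t + T, sin (ω * s - φ) * h s) = B
  rw [show ω * (t + T) - φ = ω * t + (ω * T - φ) by ring]
  generalize ω * T - φ = α
  simp only [id, cos_add, sin_add, cos_sub, sin_sub]
  linear_combination (cos α - cos φ) * h t * sin_sq_add_cos_sq (ω * t)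

lemma hasDerivAt_kernelIntegral_sin (hh : Continuous h) (hp : Periodic h T) (t : ℝ) :
    HasDerivAt (kernelIntegral (fun r => sin (ω * r - φ)) T h)
      ((sin (ω * T - φ) + sin φ) * h t
        - ω * kernelIntegral (fun r => cos (ω * r - φ)) T h t) t := by
  have hA := hasDerivAt_integral_add_const (g := fun s => cos (ω * s - φ) * h s) (by fun_prop) T t
  have hB := hasDerivAt_integral_add_const (g := fun s => sin (ω * s - φ) * h s) (by fun_prop) T t
  have hc := ((hasDerivAt_id t).const_mul ω).cos
  have hs := ((hasDerivAt_id t).const_mul ω).sin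
  rw [funext (kernelIntegral_sin_eq ω φ hh)]
  refine ((hc.mul hB).sub (hs.mul hA)).congr_deriv ?_
  rw [kernelIntegral_cos_eq ω φ hh, hp t]
  generalize (∫ s in t..t + T, cos (ω * s - φ) * h s) = A
  generalize (∫ s in t..t + T, sin (ω * s - φ) * h s) = B
  rw [show ω * (t + T) - φ = ω * t + (ω * T - φ) by ring]
  generalize ω * T - φ = α
  simp only [id, cos_add, sin_add, cos_sub, sin_sub]
  linear_combination (sin α + sin φ) * h t * sin_sq_add_cos_sq (ω * t)

end KernelIntegral

lemma contDiff_two_of_hasDerivAt {u u' u'' : ℝ → ℝ} (hu : ∀ t, HasDerivAt u (u' t) t)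
    (hu' : ∀ t, HasDerivAt u' (u'' t) t) (hu'' : Continuous u'') : ContDiff ℝ 2 u := by
  have hderiv : deriv u = u' := funext fun t => (hu t).deriv
  rw [show (2 : WithTop ℕ∞) = 1 + 1 by norm_num, contDiff_succ_iff_deriv, hderiv,
    contDiff_one_iff_deriv, funext fun t => (hu' t).deriv]
  exact ⟨fun t => (hu t).differentiableAt, by simp, fun t => (hu' t).differentiableAt, hu''⟩

def periodicGreen (ω T r : ℝ) : ℝ :=
  (2 * ω * sin (ω * T / 2))⁻¹ * cos (ω * r - ω * T / 2)

section PeriodicGreen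

variable {ω T : ℝ}

lemma periodicGreen_nonneg (hω : 0 ≤ ω) (hωT : ω * T ≤ π) {r : ℝ} (hr : r ∈ Icc 0 T) :
    0 ≤ periodicGreen ω T r := by
  have hT : 0 ≤ T := hr.1.trans hr.2
  refine mul_nonneg (inv_nonneg.2 (mul_nonneg (by positivity) ?_)) (cos_nonneg_of_mem_Icc ?_)
  · exact sin_nonneg_of_nonneg_of_le_pi (by positivity) (by linarith [pi_pos])
  · constructor <;> nlinarith [hr.1, hr.2]

lemma integral_periodicGreen (hω : ω ≠ 0) (hs : sin (ω * T / 2) ≠ 0) :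
    ∫ r in (0)..T, periodicGreen ω T r = (ω ^ 2)⁻¹ := by
  unfold periodicGreen
  rw [integral_const_mul, integral_comp_mul_sub (fun x => cos x) hω, integral_cos,
    show ω * T - ω * T / 2 = ω * T / 2 by ring, mul_zero, zero_sub, sin_neg, smul_eq_mul]
  field_simp
  ring

lemma periodicGreen_ode {h : ℝ → ℝ} (hω : ω ≠ 0) (hs : sin (ω * T / 2) ≠ 0)
    (hh : Continuous h) (hp : Periodic h T) :
    ContDiff ℝ 2 (kernelIntegral (periodicGreen ω T) T h) ∧
      ∀ t, deriv (deriv (kernelIntegral (periodicGreen ω T) T h)) t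
        + ω ^ 2 * kernelIntegral (periodicGreen ω T) T h t = h t := by
  set c := (2 * ω * sin (ω * T / 2))⁻¹
  set C := kernelIntegral (fun r => cos (ω * r - ω * T / 2)) T h
  set S := kernelIntegral (fun r => sin (ω * r - ω * T / 2)) T h
  have hc : c * (2 * ω * sin (ω * T / 2)) = 1 := inv_mul_cancel₀ (by simp [hω, hs])
  have hU : kernelIntegral (periodicGreen ω T) T h = fun t => c * C t :=
    funext (kernelIntegral_const_mul c _ h T)
  have hU' : ∀ t, HasDerivAt (fun t => c * C t) (c * ω * S t) t := fun t => by
    refine ((hasDerivAt_kernelIntegral_cos ω _ hh hp t).const_mul c).congr_deriv ?_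
    rw [show ω * T - ω * T / 2 = ω * T / 2 by ring]
    ring
  have hU'' : ∀ t, HasDerivAt (fun t => c * ω * S t) (h t - ω ^ 2 * (c * C t)) t := fun t => by
    refine ((hasDerivAt_kernelIntegral_sin ω _ hh hp t).const_mul (c * ω)).congr_deriv ?_
    rw [show ω * T - ω * T / 2 = ω * T / 2 by ring]
    linear_combination h t * hc
  rw [hU]
  have hC : Continuous C := continuous_kernelIntegral (by fun_prop) hh
  refine ⟨contDiff_two_of_hasDerivAt hU' hU'' (by fun_prop), fun t => ?_⟩
  rw [funext fun t => (hU' t).deriv, (hU'' t).deriv]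
  ring

lemma sin_half_pos (hω : 0 < ω) (hT : 0 < T) (hωT : ω * T ≤ π) : 0 < sin (ω * T / 2) :=
  sin_pos_of_pos_of_lt_pi (by positivity) (by linarith [pi_pos])

lemma kernelIntegral_periodicGreen_mem_Icc {h : ℝ → ℝ} {m M : ℝ} (hω : 0 < ω) (hT : 0 < T)
    (hωT : ω * T ≤ π) (hh : Continuous h) (hmM : ∀ s, h s ∈ Icc m M) (t : ℝ) :
    kernelIntegral (periodicGreen ω T) T h t ∈ Icc (m / ω ^ 2) (M / ω ^ 2) := by
  have := kernelIntegral_mem_Icc hT.le (by unfold periodicGreen; fun_prop)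
    (fun r => periodicGreen_nonneg hω.le hωT) hh hmM t
  rwa [integral_periodicGreen hω.ne' (sin_half_pos hω hT hωT).ne'] at this

lemma abs_kernelIntegral_periodicGreen_sub_le {h₁ h₂ : ℝ → ℝ} {d : ℝ} (hω : 0 < ω)
    (hT : 0 < T) (hωT : ω * T ≤ π) (h₁c : Continuous h₁) (h₂c : Continuous h₂)
    (hd : ∀ s, |h₁ s - h₂ s| ≤ d) (t : ℝ) :
    |kernelIntegral (periodicGreen ω T) T h₁ t - kernelIntegral (periodicGreen ω T) T h₂ t|
      ≤ d / ω ^ 2 := by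
  rw [← kernelIntegral_sub (by unfold periodicGreen; fun_prop) h₁c h₂c, abs_le, ← neg_div]
  exact kernelIntegral_periodicGreen_mem_Icc hω hT hωT (h₁c.sub h₂c)
    (fun s => abs_le.1 (hd s)) t

end PeriodicGreen

open BoundedContinuousFunction in
lemma exists_periodic_fixedPoint {Ψ : (ℝ → ℝ) → ℝ → ℝ} {C T : ℝ} {K : NNReal} (hK : K < 1)
    (hcont : ∀ v, Continuous v → Continuous (Ψ v))
    (hbdd : ∀ v, Continuous v → ∀ t, |Ψ v t| ≤ C)
    (hlip : ∀ v w d, Continuous v → Continuous w → (∀ t, |v t - w t| ≤ d) →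
      ∀ t, |Ψ v t - Ψ w t| ≤ K * d)
    (hshift : ∀ v t, Ψ (fun s => v (s + T)) t = Ψ v (t + T)) :
    ∃ x, Continuous x ∧ Ψ x = x ∧ Periodic x T := by
  let Φ : (ℝ →ᵇ ℝ) → (ℝ →ᵇ ℝ) := fun v =>
    ofNormedAddCommGroup (Ψ v) (hcont v v.continuous) C (hbdd v v.continuous)
  have hΦ : ContractingWith K Φ := by
    refine ⟨hK, LipschitzWith.of_dist_le_mul fun v w => (dist_le (by positivity)).2 fun t => ?_⟩
    exact hlip v w _ v.continuous w.continuous (fun s => dist_coe_le_dist (f := v) (g := w) s) t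
  set x := ContractingWith.fixedPoint Φ hΦ
  have hx : Φ x = x := hΦ.fixedPoint_isFixedPt
  let xT : ℝ →ᵇ ℝ := x.compContinuous ⟨fun s => s + T, by fun_prop⟩
  have hxT : Φ xT = xT := by
    ext t
    exact (hshift x t).trans (DFunLike.congr_fun hx (t + T))
  exact ⟨x, x.continuous, funext (DFunLike.congr_fun hx),
    DFunLike.congr_fun (hΦ.fixedPoint_unique hxT)⟩

theorem exists_periodic_solution_of_lipschitzOnWith {f : ℝ → ℝ → ℝ} {ω T R m M : ℝ}
    {L : NNReal} (hω : 0 < ω) (hT : 0 < T) (hωT : ω * T ≤ π)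
    (hf : ContinuousOn (uncurry f) (univ ×ˢ Ici R)) (hfT : Periodic f T)
    (hmaps : ∀ t, MapsTo (f t) (Ici R) (Icc m M)) (hlip : ∀ t, LipschitzOnWith L (f t) (Ici R))
    (hR : R ≤ m / ω ^ 2) (hL : (L : ℝ) < ω ^ 2) :
    ∃ x : ℝ → ℝ, ContDiff ℝ 2 x ∧ (∀ t, R ≤ x t) ∧ Periodic x T ∧
      ∀ t, deriv (deriv x) t + ω ^ 2 * x t = f t (x t) := by
  -- Clamping at `R` makes the map below a contraction of all of `ℝ →ᵇ ℝ`; its fixed point is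
  -- `≥ R`, where the clamp does nothing.
  set F : (ℝ → ℝ) → ℝ → ℝ := fun v s => f s (max (v s) R)
  have hFc : ∀ v, Continuous v → Continuous (F v) := fun v hv =>
    hf.comp_continuous (continuous_id.prodMk (hv.max continuous_const))
      fun s => ⟨trivial, mem_Ici.2 (le_max_right _ _)⟩
  have hFmaps : ∀ v s, F v s ∈ Icc m M := fun v s => hmaps s (mem_Ici.2 (le_max_right _ _))
  have hFlip : ∀ v w d, (∀ s, |v s - w s| ≤ d) → ∀ s, |F v s - F w s| ≤ L * d :=
    fun v w d hd s =>
      ((hlip s).dist_le_mul _ (mem_Ici.2 (le_max_right _ _)) _ (mem_Ici.2 (le_max_right _ _))).trans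
        (mul_le_mul_of_nonneg_left ((abs_max_sub_max_le_abs _ _ _).trans (hd s)) L.2)
  have hFT : ∀ v, F (fun s => v (s + T)) = fun s => F v (s + T) := fun v =>
    funext fun s => by simp only [F, hfT s]
  obtain ⟨x, hxc, hx, hxT⟩ := exists_periodic_fixedPoint
    (Ψ := fun v => kernelIntegral (periodicGreen ω T) T (F v))
    (C := max |m / ω ^ 2| |M / ω ^ 2|) (T := T) (K := (L / ω ^ 2).toNNReal)
    (Real.toNNReal_lt_one.2 ((div_lt_one (by positivity)).2 hL))
    (fun v hv => continuous_kernelIntegral (by unfold periodicGreen; fun_prop) (hFc v hv))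
    (fun v hv t => abs_le_max_abs_abs
      (kernelIntegral_periodicGreen_mem_Icc hω hT hωT (hFc v hv) (hFmaps v) t).1
      (kernelIntegral_periodicGreen_mem_Icc hω hT hωT (hFc v hv) (hFmaps v) t).2)
    (fun v w d hv hw hd t => by
      rw [Real.coe_toNNReal _ (by positivity), div_mul_eq_mul_div]
      exact abs_kernelIntegral_periodicGreen_sub_le hω hT hωT (hFc v hv) (hFc w hw)
        (hFlip v w d hd) t)
    (fun v t => by simp only [hFT, kernelIntegral_comp_add_right])
  have hxR : ∀ t, R ≤ x t := fun t => hR.trans <| by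
    rw [← hx]
    exact (kernelIntegral_periodicGreen_mem_Icc hω hT hωT (hFc x hxc) (hFmaps x) t).1
  have hFx : F x = fun t => f t (x t) := funext fun t => by simp only [F, max_eq_left (hxR t)]
  obtain ⟨hx2, hode⟩ := periodicGreen_ode hω.ne' (sin_half_pos hω hT hωT).ne' (hFc x hxc)
    (fun t => by rw [← congrFun (hFT x) t, hxT.funext])
  rw [hx] at hx2
  rw [hx, hFx] at hode
  exact ⟨x, hx2, hxR, hxT, hode⟩

def forcing (t y : ℝ) : ℝ :=
  (1 + 2 * cos (3 * t)) / y ^ ((3 : ℝ) / 2) + exp (2 * sin (3 * t)) / y ^ (2 : ℝ)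
    + 10 + cos (3 * t)

lemma forcing_periodic : Periodic forcing (2 * π / 3) := fun t => by
  funext y
  simp only [forcing, show 3 * (t + 2 * π / 3) = 3 * t + 2 * π by ring, cos_add_two_pi,
    sin_add_two_pi]

lemma continuousOn_forcing : ContinuousOn (uncurry forcing) (univ ×ˢ Ioi 0) := by
  rintro ⟨t, y⟩ ⟨-, hy⟩
  have hy : 0 < y := hy
  apply ContinuousAt.continuousWithinAt
  simp only [uncurry_def, forcing]
  fun_prop (disch := first | positivity | left; positivity)

lemma abs_rpow_neg_sub_rpow_neg_le {a b c R : ℝ} (hc : 0 ≤ c) (hR : 0 < R) (ha : R ≤ a)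
    (hb : R ≤ b) : |a ^ (-c) - b ^ (-c)| ≤ c * R ^ (-c - 1) * |a - b| := by
  have key := (convex_Ici R).norm_image_sub_le_of_norm_hasDerivWithin_le
    (f := fun x => x ^ (-c)) (f' := fun x => -c * x ^ (-c - 1)) (C := c * R ^ (-c - 1))
    (fun x hx => (hasDerivAt_rpow_const (Or.inl (hR.trans_le hx).ne')).hasDerivWithinAt)
    (fun x hx => ?_) hb ha
  · simpa only [Real.norm_eq_abs] using key
  · rw [norm_mul, norm_neg, Real.norm_of_nonneg hc,
      Real.norm_of_nonneg (rpow_nonneg (hR.le.trans hx) _)]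
    exact mul_le_mul_of_nonneg_left (rpow_le_rpow_of_nonpos hR hx (by linarith)) hc

lemma exp_two_mul_sin_le (x : ℝ) : exp (2 * sin x) ≤ 9 := by
  have h1 : exp (2 * sin x) ≤ exp 1 * exp 1 := by
    rw [← exp_add]; exact exp_le_exp.2 (by linarith [sin_le_one x])
  nlinarith [exp_one_lt_d9, exp_pos 1]

lemma abs_one_add_two_mul_cos_le (x : ℝ) : |1 + 2 * cos x| ≤ 3 :=
  abs_le.2 ⟨by linarith [neg_one_le_cos x], by linarith [cos_le_one x]⟩

lemma forcing_mem_Icc (t : ℝ) {y : ℝ} (hy : 300 ≤ y) : forcing t y ∈ Icc (44 / 5) (56 / 5) := by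
  have h32 : 300 ≤ y ^ ((3 : ℝ) / 2) :=
    hy.trans (self_le_rpow_of_one_le (by linarith) (by norm_num))
  have h2 : 90000 ≤ y ^ (2 : ℝ) := by rw [rpow_two]; nlinarith
  have t1 : |(1 + 2 * cos (3 * t)) / y ^ ((3 : ℝ) / 2)| ≤ 3 / 300 := by
    rw [abs_div, abs_of_pos (by linarith : (0 : ℝ) < y ^ ((3 : ℝ) / 2))]
    exact div_le_div₀ (by norm_num) (abs_one_add_two_mul_cos_le _) (by norm_num) h32
  have t2 : exp (2 * sin (3 * t)) / y ^ (2 : ℝ) ≤ 9 / 90000 :=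
    div_le_div₀ (by norm_num) (exp_two_mul_sin_le _) (by norm_num) h2
  have t3 : 0 ≤ exp (2 * sin (3 * t)) / y ^ (2 : ℝ) := by positivity
  rw [abs_le] at t1
  unfold forcing
  constructor <;> linarith [neg_one_le_cos (3 * t), cos_le_one (3 * t)]

lemma lipschitzOnWith_forcing (t : ℝ) : LipschitzOnWith (1 / 80) (forcing t) (Ici 300) := by
  refine LipschitzOnWith.of_dist_le_mul fun a ha b hb => ?_
  have ha : (300 : ℝ) ≤ a := ha
  have hb : (300 : ℝ) ≤ b := hb
  have l32 := abs_rpow_neg_sub_rpow_neg_le (c := 3 / 2) (by norm_num) (by norm_num) ha hb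
  have l2 := abs_rpow_neg_sub_rpow_neg_le (c := 2) (by norm_num) (by norm_num) ha hb
  have k32 : (300 : ℝ) ^ (-(3 / 2 : ℝ) - 1) ≤ 300 ^ (-2 : ℝ) :=
    rpow_le_rpow_of_exponent_le (by norm_num) (by norm_num)
  have k2 : (300 : ℝ) ^ (-2 - 1 : ℝ) ≤ 300 ^ (-2 : ℝ) :=
    rpow_le_rpow_of_exponent_le (by norm_num) (by norm_num)
  have k : (300 : ℝ) ^ (-2 : ℝ) = 1 / 90000 := by
    rw [rpow_neg (by norm_num), rpow_two]; norm_num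
  have hc := abs_one_add_two_mul_cos_le (3 * t)
  have he : |exp (2 * sin (3 * t))| ≤ 9 := by
    rw [abs_of_pos (exp_pos _)]; exact exp_two_mul_sin_le _
  have e : forcing t a - forcing t b =
      (1 + 2 * cos (3 * t)) * (a ^ (-(3 / 2 : ℝ)) - b ^ (-(3 / 2 : ℝ)))
        + exp (2 * sin (3 * t)) * (a ^ (-2 : ℝ) - b ^ (-2 : ℝ)) := by
    simp only [forcing, rpow_neg (by linarith : (0 : ℝ) ≤ a),
      rpow_neg (by linarith : (0 : ℝ) ≤ b)]
    ring
  rw [Real.dist_eq, Real.dist_eq, e, NNReal.coe_div, NNReal.coe_one, NNReal.coe_ofNat]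
  calc _ ≤ |1 + 2 * cos (3 * t)| * |a ^ (-(3 / 2 : ℝ)) - b ^ (-(3 / 2 : ℝ))|
          + |exp (2 * sin (3 * t))| * |a ^ (-2 : ℝ) - b ^ (-2 : ℝ)| := by
        rw [← abs_mul, ← abs_mul]; exact abs_add_le _ _
    _ ≤ 3 * (3 / 2 * 300 ^ (-(3 / 2 : ℝ) - 1) * |a - b|)
          + 9 * (2 * 300 ^ (-2 - 1 : ℝ) * |a - b|) := by
        gcongr
    _ ≤ 1 / 80 * |a - b| := by
        rw [k] at k32 k2
        nlinarith [abs_nonneg (a - b)]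

end

theorem example_4_2 :
    ∃ x : ℝ → ℝ,
      ContDiff ℝ 2 x ∧ (∀ t, 0 < x t) ∧
      (∀ t, x (t + 2 * Real.pi / 3) = x t) ∧
      ∀ t, deriv (deriv x) t + (1 / 40) * x t =
        (1 + 2 * Real.cos (3 * t)) / x t ^ ((3 : ℝ) / 2)
          + Real.exp (2 * Real.sin (3 * t)) / x t ^ (2 : ℝ)
          + 10 + Real.cos (3 * t) := by
  have hω : ((√40)⁻¹ : ℝ) ^ 2 = 1 / 40 := by
    rw [inv_pow, sq_sqrt (by norm_num)]; norm_num
  have hω1 : (√40)⁻¹ ≤ (1 : ℝ) := inv_le_one_of_one_le₀ (one_le_sqrt.2 (by norm_num))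
  obtain ⟨x, hx2, hx300, hxT, hode⟩ := exists_periodic_solution_of_lipschitzOnWith
    (f := forcing) (R := 300) (m := 44 / 5) (M := 56 / 5) (L := 1 / 80)
    (by positivity : 0 < (√40)⁻¹) (by positivity : 0 < 2 * π / 3)
    (by nlinarith [pi_pos])
    (continuousOn_forcing.mono (prod_mono subset_rfl (Ici_subset_Ioi.2 (by norm_num))))
    forcing_periodic (fun t _ hy => forcing_mem_Icc t hy) lipschitzOnWith_forcing
    (by rw [hω]; norm_num) (by rw [hω]; norm_num)
  rw [hω] at hode
  exact ⟨x, hx2, fun t => by linarith [hx300 t], hxT, hode⟩
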